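/- Let H be a Hilbert space with increasing finite-dimensional subspaces Z_N having dense union, L : H → X and Q : H → W continuous linear surjections onto finite-dimensional Hilbert spaces, with L mapping ker Q onto X. Let L₀ be the restriction of L to ker Q ⊖ ker L and L_{0,N} the restriction of L to ker(Q|Z_N) ⊖ ker(L|Z_N). Then L_{0,N} L_{0,N}* → L₀ L₀* as operators on X as N → ∞, and consequently det(L_{0,N} L_{0,N}*) → det(L₀ L₀*). -/

import Mathlib

/-!
For a closed subspace `K` and `S = K ⊖ (K ∩ ker L)`, the projections onto `S` and onto `K` differ
by the projection onto `K ∩ ker L`, which `L` kills; hence `(L ι_S)(L ι_S)* = L P_K L*`. So both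
operators in question are `L P_K L*` with `K = ker Q`, resp. `K = Z_N ∩ ker Q`, and it suffices that
`P_{Z_N ∩ ker Q} → P_{ker Q}` strongly, i.e. that `⋃ N, Z_N ∩ ker Q` is dense in `ker Q`. Since
`W` is finite-dimensional, `Q(Z_{N₀}) = W` for some `N₀`, so `Q` has a right inverse `R` with values
in `Z_{N₀}`; the continuous map `1 - R Q` fixes `ker Q` and sends `Z_N` into `Z_{max N N₀} ∩ ker Q`.
On the finite-dimensional space `X`, strong convergence is norm convergence, and `det` is
continuous.
-/

open Filter Topology

namespace Submodule

variable {𝕜 E : Type*} [RCLike 𝕜] [NormedAddCommGroup E] [InnerProductSpace 𝕜 E]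

theorem starProjection_inf_orthogonal {K₀ K : Submodule 𝕜 E} [K₀.HasOrthogonalProjection]
    [K.HasOrthogonalProjection] [(K ⊓ K₀ᗮ).HasOrthogonalProjection] (h : K₀ ≤ K) :
    (K ⊓ K₀ᗮ).starProjection = K.starProjection - K₀.starProjection := by
  ext v
  rw [sub_apply]
  refine eq_starProjection_of_mem_orthogonal ⟨?_, ?_⟩ ?_
  · exact K.sub_mem (K.starProjection_apply_mem v) (h (K₀.starProjection_apply_mem v))
  · have : v - K.starProjection v ∈ K₀ᗮ := orthogonal_le h (K.sub_starProjection_mem_orthogonal v)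
    simpa using sub_mem (K₀.sub_starProjection_mem_orthogonal v) this
  · have h₁ : v - K.starProjection v ∈ (K ⊓ K₀ᗮ)ᗮ :=
      orthogonal_le inf_le_left (K.sub_starProjection_mem_orthogonal v)
    have h₂ : K₀.starProjection v ∈ (K ⊓ K₀ᗮ)ᗮ :=
      orthogonal_le inf_le_right (K₀.le_orthogonal_orthogonal (K₀.starProjection_apply_mem v))
    simpa [sub_sub_eq_add_sub, add_sub_right_comm] using add_mem h₁ h₂

theorem starProjection_tendsto_of_le_topologicalClosure_iSup {ι : Type*} [Preorder ι]
    (U : ι → Submodule 𝕜 E) [∀ i, (U i).HasOrthogonalProjection] (K : Submodule 𝕜 E)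
    [K.HasOrthogonalProjection] (hU : Monotone U) (hUK : ∀ i, U i ≤ K)
    (hKU : K ≤ (⨆ i, U i).topologicalClosure) (x : E) :
    Tendsto (fun i => (U i).starProjection x) atTop (𝓝 (K.starProjection x)) := by
  have hK : (⨆ i, U i).topologicalClosure = K := by
    refine le_antisymm (topologicalClosure_minimal _ (iSup_le hUK) ?_) hKU
    rw [← K.orthogonal_orthogonal]
    exact Kᗮ.isClosed_orthogonal
  subst hK
  exact starProjection_tendsto_closure_iSup U hU x

end Submodule

namespace ContinuousLinearMap

variable {𝕜 E F : Type*} [RCLike 𝕜] [NormedAddCommGroup E] [InnerProductSpace 𝕜 E]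
  [NormedAddCommGroup F] [InnerProductSpace 𝕜 F]

theorem comp_starProjection_inf_orthogonal_ker (L : E →L[𝕜] F) (K : Submodule 𝕜 E)
    [K.HasOrthogonalProjection] [(K ⊓ LinearMap.ker (L : E →ₗ[𝕜] F)).HasOrthogonalProjection]
    [(K ⊓ (K ⊓ LinearMap.ker (L : E →ₗ[𝕜] F))ᗮ).HasOrthogonalProjection] :
    L ∘L (K ⊓ (K ⊓ LinearMap.ker (L : E →ₗ[𝕜] F))ᗮ).starProjection = L ∘L K.starProjection := by
  have hL : L ∘L (K ⊓ LinearMap.ker (L : E →ₗ[𝕜] F)).starProjection = 0 := by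
    ext v
    exact ((K ⊓ LinearMap.ker (L : E →ₗ[𝕜] F)).starProjection_apply_mem v).2
  rw [Submodule.starProjection_inf_orthogonal inf_le_left, comp_sub, hL, sub_zero]

variable [CompleteSpace E] [CompleteSpace F]

theorem comp_subtypeL_comp_adjoint (L : E →L[𝕜] F) (S : Submodule 𝕜 E) [CompleteSpace S] :
    (L ∘L S.subtypeL) ∘L adjoint (L ∘L S.subtypeL) = L ∘L S.starProjection ∘L adjoint L := by
  rw [adjoint_comp, S.adjoint_subtypeL, Submodule.starProjection]
  rfl

theorem comp_subtypeL_comp_adjoint_inf_orthogonal_ker (L : E →L[𝕜] F) (K : Submodule 𝕜 E)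
    [CompleteSpace K] [CompleteSpace ↥(K ⊓ (K ⊓ LinearMap.ker (L : E →ₗ[𝕜] F))ᗮ)] :
    (L ∘L (K ⊓ (K ⊓ LinearMap.ker (L : E →ₗ[𝕜] F))ᗮ).subtypeL) ∘L
        adjoint (L ∘L (K ⊓ (K ⊓ LinearMap.ker (L : E →ₗ[𝕜] F))ᗮ).subtypeL) =
      L ∘L K.starProjection ∘L adjoint L := by
  have : CompleteSpace ↥(K ⊓ LinearMap.ker (L : E →ₗ[𝕜] F)) :=
    ((completeSpace_coe_iff_isComplete.mp ‹_›).isClosed.inter L.isClosed_ker).completeSpace_coe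
  rw [comp_subtypeL_comp_adjoint, ← comp_assoc, comp_starProjection_inf_orthogonal_ker, comp_assoc]

end ContinuousLinearMap

theorem ContinuousLinearMap.tendsto_of_tendsto_apply {𝕜 E F ι : Type*}
    [NontriviallyNormedField 𝕜] [CompleteSpace 𝕜] [NormedAddCommGroup E] [NormedSpace 𝕜 E]
    [FiniteDimensional 𝕜 E] [NormedAddCommGroup F] [NormedSpace 𝕜 F]
    {l : Filter ι} {T : ι → E →L[𝕜] F} {T₀ : E →L[𝕜] F}
    (h : ∀ x, Tendsto (fun i => T i x) l (𝓝 (T₀ x))) : Tendsto T l (𝓝 T₀) := by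
  let v := Module.finBasis 𝕜 E
  obtain ⟨C, -, hC⟩ := v.exists_opNorm_le (F := F)
  have hsum : Tendsto (fun i => C * ∑ j, ‖T i (v j) - T₀ (v j)‖) l (𝓝 (C * ∑ _j, 0)) :=
    (tendsto_finsetSum _ fun j _ => tendsto_iff_norm_sub_tendsto_zero.mp (h (v j))).const_mul C
  rw [Finset.sum_const_zero, mul_zero] at hsum
  refine tendsto_iff_norm_sub_tendsto_zero.mpr
    (squeeze_zero (fun _ => norm_nonneg _) (fun i => ?_) hsum)
  exact hC (Finset.sum_nonneg fun j _ => norm_nonneg _)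
    fun j => Finset.single_le_sum (f := fun j => ‖T i (v j) - T₀ (v j)‖) (fun _ _ => norm_nonneg _)
      (Finset.mem_univ j)

section Density

variable {𝕜 H W : Type*} [NontriviallyNormedField 𝕜] [CompleteSpace 𝕜]
  [NormedAddCommGroup H] [NormedSpace 𝕜 H] [NormedAddCommGroup W] [NormedSpace 𝕜 W]
  [FiniteDimensional 𝕜 W] {Z : ℕ → Submodule 𝕜 H} {Q : H →L[𝕜] W}

theorem exists_map_eq_top_of_dense_iUnion (hZ : Monotone Z) (hdense : Dense (⋃ N, (Z N : Set H)))
    (hQ : Function.Surjective Q) : ∃ N, (Z N).map (Q : H →ₗ[𝕜] W) = ⊤ := by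
  let M : ℕ →o Submodule 𝕜 W :=
    ⟨fun N => (Z N).map (Q : H →ₗ[𝕜] W), fun _ _ h => Submodule.map_mono (hZ h)⟩
  obtain ⟨N, hN⟩ := monotone_stabilizes_iff_noetherian.mpr inferInstance M
  refine ⟨N, ?_⟩
  have hsub : Q '' ⋃ n, (Z n : Set H) ⊆ M N := by
    rw [Set.image_iUnion, Set.iUnion_subset_iff]
    intro n
    rcases le_total n N with h | h
    · exact M.monotone h
    · exact (hN n h).ge
  have hdense' : Dense (M N : Set W) := (hQ.denseRange.dense_image Q.continuous hdense).mono hsub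
  exact SetLike.coe_injective ((M N).closed_of_finiteDimensional.closure_eq ▸ hdense'.closure_eq)

theorem exists_rightInverse_apply_mem (hZ : Monotone Z) (hdense : Dense (⋃ N, (Z N : Set H)))
    (hQ : Function.Surjective Q) :
    ∃ N, ∃ R : W →L[𝕜] H, (∀ w, R w ∈ Z N) ∧ ∀ w, Q (R w) = w := by
  obtain ⟨N, hN⟩ := exists_map_eq_top_of_dense_iUnion hZ hdense hQ
  obtain ⟨R, hR⟩ := ((Q : H →ₗ[𝕜] W).domRestrict (Z N)).exists_rightInverse_of_surjective
    (by rwa [LinearMap.range_domRestrict])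
  exact ⟨N, LinearMap.toContinuousLinearMap ((Z N).subtype ∘ₗ R), fun w => (R w).2,
    LinearMap.congr_fun hR⟩

theorem ker_le_topologicalClosure_iSup_inf_ker (hZ : Monotone Z)
    (hdense : Dense (⋃ N, (Z N : Set H))) (hQ : Function.Surjective Q) :
    LinearMap.ker (Q : H →ₗ[𝕜] W) ≤
      (⨆ N, Z N ⊓ LinearMap.ker (Q : H →ₗ[𝕜] W)).topologicalClosure := by
  obtain ⟨N₀, R, hRZ, hQR⟩ := exists_rightInverse_apply_mem hZ hdense hQ
  let P : H →L[𝕜] H := ContinuousLinearMap.id 𝕜 H - R ∘L Q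
  have hP : ∀ N, ∀ z ∈ Z N, P z ∈ ⨆ N, Z N ⊓ LinearMap.ker (Q : H →ₗ[𝕜] W) := by
    intro N z hz
    refine Submodule.mem_iSup_of_mem (max N N₀) ⟨?_, ?_⟩
    · exact sub_mem (hZ (le_max_left N N₀) hz) (hZ (le_max_right N N₀) (hRZ _))
    · simp [P, hQR]
  intro u hu
  have hPu : P u = u := by
    have hQu : Q u = 0 := hu
    simp [P, hQu]
  rw [← hPu, ← SetLike.mem_coe, Submodule.topologicalClosure_coe]
  refine closure_mono ?_ (image_closure_subset_closure_image P.continuous ⟨u, hdense u, rfl⟩)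
  rintro _ ⟨z, hz, rfl⟩
  obtain ⟨N, hz⟩ := Set.mem_iUnion.mp hz
  exact hP N z hz

end Density

theorem stmt15_general {H X W : Type*}
    [NormedAddCommGroup H] [InnerProductSpace ℝ H] [CompleteSpace H]
    [NormedAddCommGroup X] [InnerProductSpace ℝ X] [FiniteDimensional ℝ X]
    [NormedAddCommGroup W] [InnerProductSpace ℝ W] [FiniteDimensional ℝ W]
    (Z : ℕ → Submodule ℝ H) (hmono : Monotone Z) [∀ N, FiniteDimensional ℝ (Z N)]
    (hdense : Dense (⋃ N, (Z N : Set H)))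
    (L : H →L[ℝ] X) (Q : H →L[ℝ] W)
    (hQ : Function.Surjective Q)
    (S : Submodule ℝ H)
    (hS : S = LinearMap.ker (Q : H →ₗ[ℝ] W) ⊓ (LinearMap.ker (Q : H →ₗ[ℝ] W) ⊓ LinearMap.ker (L : H →ₗ[ℝ] X))ᗮ)
    [CompleteSpace S]
    (SN : ℕ → Submodule ℝ H)
    (hSN : ∀ N, SN N = (Z N ⊓ LinearMap.ker (Q : H →ₗ[ℝ] W)) ⊓
      ((Z N ⊓ LinearMap.ker (Q : H →ₗ[ℝ] W)) ⊓ (Z N ⊓ LinearMap.ker (L : H →ₗ[ℝ] X)))ᗮ)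
    [∀ N, CompleteSpace (SN N)] :
    Tendsto
      (fun N => (L.comp (SN N).subtypeL) ∘L
        ContinuousLinearMap.adjoint (L.comp (SN N).subtypeL))
      atTop (𝓝 ((L.comp S.subtypeL) ∘L ContinuousLinearMap.adjoint (L.comp S.subtypeL))) ∧
    Tendsto
      (fun N => LinearMap.det
        (((L.comp (SN N).subtypeL) ∘L
          ContinuousLinearMap.adjoint (L.comp (SN N).subtypeL) : X →L[ℝ] X) : X →ₗ[ℝ] X))
      atTop
      (𝓝 (LinearMap.det
        (((L.comp S.subtypeL) ∘L
          ContinuousLinearMap.adjoint (L.comp S.subtypeL) : X →L[ℝ] X) : X →ₗ[ℝ] X))) := by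
  set K := LinearMap.ker (Q : H →ₗ[ℝ] W)
  have : CompleteSpace K := Q.isClosed_ker.completeSpace_coe
  obtain rfl : SN = fun N => (Z N ⊓ K) ⊓ ((Z N ⊓ K) ⊓ LinearMap.ker (L : H →ₗ[ℝ] X))ᗮ := by
    ext1 N
    rw [hSN, ← inf_inf_distrib_left, ← inf_assoc (Z N) K]
  subst hS
  have hproj := Submodule.starProjection_tendsto_of_le_topologicalClosure_iSup (fun N => Z N ⊓ K) K
    (fun _ _ h => inf_le_inf_right K (hmono h)) (fun _ => inf_le_right)
    (ker_le_topologicalClosure_iSup_inf_ker hmono hdense hQ)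
  have hconv : Tendsto (fun N => L ∘L (Z N ⊓ K).starProjection ∘L ContinuousLinearMap.adjoint L)
      atTop (𝓝 (L ∘L K.starProjection ∘L ContinuousLinearMap.adjoint L)) :=
    ContinuousLinearMap.tendsto_of_tendsto_apply fun x =>
      (L.continuous.tendsto _).comp (hproj (ContinuousLinearMap.adjoint L x))
  simp only [ContinuousLinearMap.comp_subtypeL_comp_adjoint_inf_orthogonal_ker]
  exact ⟨hconv, (ContinuousLinearMap.continuous_det.tendsto _).comp hconv⟩

/-- With `L₀` the restriction of `L` to `ker Q ⊖ ker L` and `L_{0,N}` the restriction of `L`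
to `ker(Q|Z_N) ⊖ ker(L|Z_N)`, the operators `L_{0,N} L_{0,N}*` converge to `L₀ L₀*` on `X`,
and consequently their determinants converge. -/
theorem stmt15 {H X W : Type*}
    [NormedAddCommGroup H] [InnerProductSpace ℝ H] [CompleteSpace H]
    [NormedAddCommGroup X] [InnerProductSpace ℝ X] [FiniteDimensional ℝ X]
    [NormedAddCommGroup W] [InnerProductSpace ℝ W] [FiniteDimensional ℝ W]
    (Z : ℕ → Submodule ℝ H) (hmono : Monotone Z) [∀ N, FiniteDimensional ℝ (Z N)]
    (hdense : Dense (⋃ N, (Z N : Set H)))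
    (L : H →L[ℝ] X) (Q : H →L[ℝ] W)
    (hL : Function.Surjective L) (hQ : Function.Surjective Q)
    (hLkerQ : Submodule.map (L : H →ₗ[ℝ] X) (LinearMap.ker (Q : H →ₗ[ℝ] W)) = ⊤)
    (S : Submodule ℝ H)
    (hS : S = LinearMap.ker (Q : H →ₗ[ℝ] W) ⊓ (LinearMap.ker (Q : H →ₗ[ℝ] W) ⊓ LinearMap.ker (L : H →ₗ[ℝ] X))ᗮ)
    [CompleteSpace S]
    (SN : ℕ → Submodule ℝ H)
    (hSN : ∀ N, SN N = (Z N ⊓ LinearMap.ker (Q : H →ₗ[ℝ] W)) ⊓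
      ((Z N ⊓ LinearMap.ker (Q : H →ₗ[ℝ] W)) ⊓ (Z N ⊓ LinearMap.ker (L : H →ₗ[ℝ] X)))ᗮ)
    [∀ N, CompleteSpace (SN N)] :
    Tendsto
      (fun N => (L.comp (SN N).subtypeL) ∘L
        ContinuousLinearMap.adjoint (L.comp (SN N).subtypeL))
      atTop (𝓝 ((L.comp S.subtypeL) ∘L ContinuousLinearMap.adjoint (L.comp S.subtypeL))) ∧
    Tendsto
      (fun N => LinearMap.det
        (((L.comp (SN N).subtypeL) ∘L
          ContinuousLinearMap.adjoint (L.comp (SN N).subtypeL) : X →L[ℝ] X) : X →ₗ[ℝ] X))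
      atTop
      (𝓝 (LinearMap.det
        (((L.comp S.subtypeL) ∘L
          ContinuousLinearMap.adjoint (L.comp S.subtypeL) : X →L[ℝ] X) : X →ₗ[ℝ] X))) :=
  stmt15_general Z hmono hdense L Q hQ S hS SN hSN
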